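/- Let X be a real Hilbert space, let f : X → ℝ be convex, continuous and nonnegative, and let Ψ : ℝ → ℝ be continuous. Suppose that for every u ∈ X there exists a subgradient η of f at u with ‖η‖ ≤ Ψ(f(u)). Then for every u ∈ X and every subgradient ζ of f at u one has ‖ζ‖ ≤ Ψ(f(u)). -/

import Mathlib

/-- A subgradient of `f` at `u`: `f u + ⟪η, y - u⟫ ≤ f y` for all `y`. -/
def HasSubgradientAt {X : Type*} [NormedAddCommGroup X] [InnerProductSpace ℝ X]
    (f : X → ℝ) (η u : X) : Prop :=
  ∀ y, f u + inner ℝ η (y - u) ≤ f y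

/-- If a convex, continuous, nonnegative `f` on a real Hilbert space admits, at every point `u`,
some subgradient `η` with `‖η‖ ≤ Ψ (f u)` (with `Ψ` continuous), then *every* subgradient `ζ`
of `f` at any `u` satisfies `‖ζ‖ ≤ Ψ (f u)`. -/
theorem norm_le_of_forall_exists_subgradient_norm_le
    {X : Type*} [NormedAddCommGroup X] [InnerProductSpace ℝ X] [CompleteSpace X]
    (f : X → ℝ) (hf_conv : ConvexOn ℝ Set.univ f) (hf_cont : Continuous f)
    (hf_nonneg : ∀ u, 0 ≤ f u)
    (Ψ : ℝ → ℝ) (hΨ : Continuous Ψ)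
    (h : ∀ u : X, ∃ η : X, HasSubgradientAt f η u ∧ ‖η‖ ≤ Ψ (f u)) :
    ∀ u ζ : X, HasSubgradientAt f ζ u → ‖ζ‖ ≤ Ψ (f u) := by
  intro u ζ hζ
  rcases eq_or_ne ζ 0 with rfl | hz
  · simp only [norm_zero]
    obtain ⟨η, _, hηn⟩ := h u
    exact le_trans (norm_nonneg η) hηn
  · have hζpos : (0 : ℝ) < ‖ζ‖ := norm_pos_iff.mpr hz
    have key : ∀ t : ℝ, t ∈ Set.Ioi (0 : ℝ) →
        ‖ζ‖ ^ 2 ≤ Ψ (f (u + t • ζ)) * ‖ζ‖ := by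
      intro t ht
      obtain ⟨η, hη, hηn⟩ := h (u + t • ζ)
      have h1 := hζ (u + t • ζ)
      have h2 := hη u
      simp only [add_sub_cancel_left] at h1
      have h3 : u - (u + t • ζ) = -(t • ζ) := by abel
      rw [h3] at h2
      have hsum : (inner ℝ ζ (t • ζ) : ℝ) ≤ inner ℝ η (t • ζ) := by
        have : (inner ℝ η (-(t • ζ)) : ℝ) = -inner ℝ η (t • ζ) := inner_neg_right _ _
        nlinarith [h1, h2, this]
      rw [real_inner_smul_right, real_inner_smul_right,
        real_inner_self_eq_norm_sq] at hsum
      have hsum' : ‖ζ‖ ^ 2 ≤ inner ℝ η ζ := by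
        have := mul_le_mul_iff_right₀ (Set.mem_Ioi.mp ht) |>.mp hsum
        linarith
      calc ‖ζ‖ ^ 2 ≤ inner ℝ η ζ := hsum'
        _ ≤ ‖η‖ * ‖ζ‖ := real_inner_le_norm η ζ
        _ ≤ Ψ (f (u + t • ζ)) * ‖ζ‖ := by
            exact mul_le_mul_of_nonneg_right hηn (norm_nonneg ζ)
    have hlim : Filter.Tendsto (fun t : ℝ => Ψ (f (u + t • ζ)) * ‖ζ‖)
        (nhdsWithin 0 (Set.Ioi 0)) (nhds (Ψ (f u) * ‖ζ‖)) := by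
      have hc : Continuous (fun t : ℝ => Ψ (f (u + t • ζ)) * ‖ζ‖) := by
        continuity
      have := hc.continuousAt (x := (0 : ℝ))
      have h0 : Ψ (f (u + (0:ℝ) • ζ)) * ‖ζ‖ = Ψ (f u) * ‖ζ‖ := by simp
      exact h0 ▸ (this.continuousWithinAt : _)
    have hle : ‖ζ‖ ^ 2 ≤ Ψ (f u) * ‖ζ‖ :=
      ge_of_tendsto hlim (Filter.eventually_of_mem self_mem_nhdsWithin key)
    have : ‖ζ‖ * ‖ζ‖ ≤ Ψ (f u) * ‖ζ‖ := by nlinarith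
    exact (mul_le_mul_iff_left₀ hζpos).mp this
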